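/- arXiv:1405.4409 — 3 statements merged into one kernel-verified Lean document; each statement's English description precedes it below -/
import Mathlib

section
/- For every vector space V over Z_2 of dimension d ≥ 1, there exists a multiset of 8d nonzero vectors in V such that every submultiset containing at least 3/4 of them (i.e., at least 6d of the vectors) spans V. -/
/-!
Choose `t : Fin (8d) → V` at random. For a nonzero functional `f`, weight each tuple by
`3 ^ #{i | f (t i) = 0}`; since `ker f` is half of `V`, the total weight is `(2 |V|) ^ (8d)`,
while a tuple with at most `2d` indices outside `ker f` weighs at least `3 ^ (6d)`. A union
bound over the fewer than `2 ^ d` nonzero functionals works because `2 ^ d * 2 ^ (8d) = 512 ^ d`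
is less than `3 ^ (6d) = 729 ^ d`. Zero entries of a good tuple can be replaced by any nonzero
vector. A submultiset of at least `6d` of the `t i` then meets the complement of every
hyperplane `ker f`, so it spans.
-/

open Finset

theorem pow_mul_card_filter_card_not_le_le {α ι : Type*} [Fintype α] [Fintype ι]
    [DecidableEq ι] (p : α → Prop) [DecidablePred p] {c : ℕ} (hc : 1 ≤ c) (k : ℕ) :
    c ^ (Fintype.card ι - k) * #{t : ι → α | #{i | ¬p (t i)} ≤ k} ≤
      (∑ a, if p a then c else 1) ^ Fintype.card ι := by
  have weight_eq (t : ι → α) : ∏ i, (if p (t i) then c else 1) = c ^ #{i | p (t i)} := by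
    rw [prod_ite, prod_const, prod_const_one, mul_one]
  calc c ^ (Fintype.card ι - k) * #{t : ι → α | #{i | ¬p (t i)} ≤ k}
      = ∑ t : ι → α with #{i | ¬p (t i)} ≤ k, c ^ (Fintype.card ι - k) := by
        rw [sum_const, smul_eq_mul, mul_comm]
    _ ≤ ∑ t : ι → α with #{i | ¬p (t i)} ≤ k, ∏ i, (if p (t i) then c else 1) := by
        refine sum_le_sum fun t ht => ?_
        rw [weight_eq]
        refine Nat.pow_le_pow_right hc ?_
        have := card_filter_add_card_filter_not (s := univ) (fun i => p (t i))
        rw [card_univ] at this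
        have := (mem_filter.mp ht).2
        omega
    _ ≤ ∑ t : ι → α, ∏ i, (if p (t i) then c else 1) :=
        sum_le_sum_of_subset (filter_subset _ _)
    _ = (∑ a, if p a then c else 1) ^ Fintype.card ι := by
        rw [← Fintype.prod_sum (fun _ a => if p a then c else 1), prod_const, card_univ]

section ZModTwo

variable {V : Type*} [AddCommGroup V] [Module (ZMod 2) V]

theorem two_mul_natCard_ker {f : Module.Dual (ZMod 2) V} (hf : f ≠ 0) :
    2 * Nat.card (LinearMap.ker f) = Nat.card V := by
  rw [Submodule.card_eq_card_quotient_mul_card (LinearMap.ker f),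
    Nat.card_congr (f.quotKerEquivOfSurjective (LinearMap.surjective_of_ne_zero hf)).toEquiv,
    Nat.card_zmod, mul_comm]

variable [Fintype V]

theorem sum_ite_apply_eq_zero_three_one {f : Module.Dual (ZMod 2) V} (hf : f ≠ 0) :
    (∑ v, if f v = 0 then 3 else 1) = 2 * Fintype.card V := by
  have hker : 2 * #{v | f v = 0} = Fintype.card V := by
    rw [← Fintype.card_subtype, ← Nat.card_eq_fintype_card, ← Nat.card_eq_fintype_card,
      ← two_mul_natCard_ker hf]
    rfl
  have := card_filter_add_card_filter_not (s := univ) (fun v => f v = 0)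
  rw [sum_ite, sum_const, sum_const, smul_eq_mul, smul_eq_mul, mul_one, card_univ] at *
  omega

theorem pow_mul_card_filter_card_apply_ne_zero_le {ι : Type*} [Fintype ι] [DecidableEq ι]
    {f : Module.Dual (ZMod 2) V} (hf : f ≠ 0) (k : ℕ) :
    3 ^ (Fintype.card ι - k) * #{t : ι → V | #{i | f (t i) ≠ 0} ≤ k} ≤
      (2 * Fintype.card V) ^ Fintype.card ι := by
  rw [← sum_ite_apply_eq_zero_three_one hf]
  exact pow_mul_card_filter_card_not_le_le (fun v => f v = 0) (by norm_num) k

theorem exists_forall_lt_card_filter_apply_ne_zero {ι : Type*} [Fintype ι] [DecidableEq ι]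
    (k : ℕ)
    (h : Nat.card (Module.Dual (ZMod 2) V) * 2 ^ Fintype.card ι < 3 ^ (Fintype.card ι - k)) :
    ∃ t : ι → V, ∀ f : Module.Dual (ZMod 2) V, f ≠ 0 → k < #{i | f (t i) ≠ 0} := by
  classical
  have : Finite (Module.Dual (ZMod 2) V) := Finite.of_injective _ DFunLike.coe_injective
  have : Fintype (Module.Dual (ZMod 2) V) := Fintype.ofFinite _
  by_contra! hbad
  set n := Fintype.card ι
  set bad : Module.Dual (ZMod 2) V → Finset (ι → V) :=
    fun f => {t | #{i | f (t i) ≠ 0} ≤ k}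
  have hcover : (univ : Finset (ι → V)) ⊆ ({f | f ≠ 0} : Finset _).biUnion bad := by
    intro t _
    obtain ⟨f, hf, ht⟩ := hbad t
    exact mem_biUnion.mpr ⟨f, by simpa using hf, by simpa [bad] using ht⟩
  have hle : 3 ^ (n - k) * Fintype.card V ^ n ≤
      Nat.card (Module.Dual (ZMod 2) V) * 2 ^ n * Fintype.card V ^ n :=
    calc 3 ^ (n - k) * Fintype.card V ^ n
        ≤ 3 ^ (n - k) * ∑ f ∈ {f | f ≠ 0}, #(bad f) := by
          rw [← Fintype.card_fun, ← card_univ]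
          exact Nat.mul_le_mul_left _ ((card_le_card hcover).trans card_biUnion_le)
      _ ≤ ∑ f ∈ ({f | f ≠ 0} : Finset (Module.Dual (ZMod 2) V)),
            (2 * Fintype.card V) ^ n := by
          rw [mul_sum]
          refine sum_le_sum fun f hf => ?_
          exact pow_mul_card_filter_card_apply_ne_zero_le (by simpa using hf) k
      _ ≤ Nat.card (Module.Dual (ZMod 2) V) * 2 ^ n * Fintype.card V ^ n := by
          rw [sum_const, smul_eq_mul, mul_pow, mul_assoc, Nat.card_eq_fintype_card]
          exact Nat.mul_le_mul_right _ (card_le_univ _)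
  have hV : 0 < Fintype.card V ^ n := pow_pos Fintype.card_pos n
  exact lt_irrefl _ (hle.trans_lt (Nat.mul_lt_mul_of_pos_right h hV))

theorem exists_forall_ne_zero_forall_lt_card_filter_apply_ne_zero [Nontrivial V]
    {ι : Type*} [Fintype ι] [DecidableEq ι] (k : ℕ)
    (h : Nat.card (Module.Dual (ZMod 2) V) * 2 ^ Fintype.card ι < 3 ^ (Fintype.card ι - k)) :
    ∃ t : ι → V, (∀ i, t i ≠ 0) ∧
      ∀ f : Module.Dual (ZMod 2) V, f ≠ 0 → k < #{i | f (t i) ≠ 0} := by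
  classical
  obtain ⟨t, ht⟩ := exists_forall_lt_card_filter_apply_ne_zero k h
  obtain ⟨v, hv⟩ := exists_ne (0 : V)
  refine ⟨fun i => if t i = 0 then v else t i, fun i => ?_, fun f hf => ?_⟩
  · beta_reduce
    split_ifs <;> assumption
  · refine (ht f hf).trans_le (card_le_card fun i => ?_)
    simp only [mem_filter, mem_univ, true_and]
    intro hi
    rwa [if_neg (fun h0 => hi (by rw [h0, map_zero]))]

end ZModTwo

theorem span_eq_top_of_forall_lt_card_filter {K V : Type*} [DivisionRing K] [DecidableEq K]
    [AddCommGroup V] [Module K V] {M T : Multiset V} {k : ℕ}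
    (hM : ∀ f : Module.Dual K V, f ≠ 0 → k < Multiset.card (M.filter (f · ≠ 0)))
    (hT : T ≤ M) (hcard : Multiset.card M ≤ Multiset.card T + k) :
    Submodule.span K {v : V | v ∈ T} = ⊤ := by
  by_contra hspan
  obtain ⟨f, hf, hker⟩ := Submodule.exists_le_ker_of_lt_top _ (lt_top_iff_ne_top.mpr hspan)
  have hTker : T ≤ M.filter (f · = 0) :=
    Multiset.le_filter.mpr ⟨hT, fun v hv => hker (Submodule.subset_span hv)⟩
  have hsplit := Multiset.card_add (M.filter (f · = 0)) (M.filter (f · ≠ 0))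
  rw [Multiset.filter_add_not] at hsplit
  have := Multiset.card_le_card hTker
  have := hM f hf
  omega

/-- Claim 2.1: in a `d`-dimensional vector space over `ℤ/2` (with `d ≥ 1`) there is a
multiset of `8d` nonzero vectors such that every submultiset containing at least
`3/4` of them (i.e. at least `6d` vectors) spans the whole space. -/
theorem stmt0 (V : Type*) [AddCommGroup V] [Module (ZMod 2) V]
    [FiniteDimensional (ZMod 2) V] (d : ℕ) (hd : 1 ≤ d)
    (hdim : Module.finrank (ZMod 2) V = d) :
    ∃ M : Multiset V, Multiset.card M = 8 * d ∧ (∀ v ∈ M, v ≠ 0) ∧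
      ∀ T : Multiset V, T ≤ M → 6 * d ≤ Multiset.card T →
        Submodule.span (ZMod 2) {v : V | v ∈ T} = ⊤ := by
  classical
  have : Fintype V := @Fintype.ofFinite V (Module.finite_of_finite (ZMod 2))
  have : Nontrivial V := Module.nontrivial_of_finrank_pos (R := ZMod 2) (by omega)
  have hdual : Nat.card (Module.Dual (ZMod 2) V) = 2 ^ d := by
    rw [Module.natCard_eq_pow_finrank (K := ZMod 2), Subspace.dual_finrank_eq, hdim,
      Nat.card_zmod]
  have hcount : Nat.card (Module.Dual (ZMod 2) V) * 2 ^ Fintype.card (Fin (8 * d)) <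
      3 ^ (Fintype.card (Fin (8 * d)) - 2 * d) := by
    rw [hdual, Fintype.card_fin, ← pow_add, show d + 8 * d = 9 * d by ring,
      show 8 * d - 2 * d = 6 * d by omega, pow_mul, pow_mul]
    exact Nat.pow_lt_pow_left (by norm_num) (by omega)
  obtain ⟨t, ht0, ht⟩ := exists_forall_ne_zero_forall_lt_card_filter_apply_ne_zero _ hcount
  have hM : Multiset.card (univ.val.map t) = 8 * d := by simp
  refine ⟨univ.val.map t, hM, by simpa using ht0, fun T hT hcard => ?_⟩
  refine span_eq_top_of_forall_lt_card_filter (k := 2 * d) (fun f hf => ?_) hT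
    (by rw [hM]; omega)
  simpa [Multiset.filter_map, ← filter_val] using ht f hf
end

section
/- If v_1, …, v_{8d} are chosen independently and uniformly at random from V \ {0}, where V is a Z_2-vector space of dimension d, then the probability that there exists a subspace U of dimension d−1 containing more than 6d of the v_i is at most 2^d · exp(−d), which is less than 1 for all d ≥ 1. -/
/-!
Every hyperplane lies in the kernel of a nonzero linear functional, and there are at most `2^d`
functionals, so a union bound reduces the claim to a single proper subspace `U`. At most half of
the nonzero vectors lie in `U` (translate by a vector outside `U`), and weighting each coordinate
by `3` when it lies in `U` (the exponential-moment trick behind Chernoff's bound) gives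
`#{more than k coordinates in U} * 3^(k+1) ≤ (2 * #(V \ {0}))^n`. For `k = 6d`, `n = 8d` the
loss factor is `2^(8d) / 3^(6d) ≤ exp (-d)`, since `256 * e ≤ 729`.
-/

open Finset Module Real

section Counting

variable {α ι : Type*} [Fintype α] [Fintype ι] [DecidableEq ι]

theorem card_filter_lt_card_filter_mul_pow_le (p : α → Prop) [DecidablePred p] {a : ℕ}
    (ha : 1 ≤ a) (k : ℕ) :
    #{f : ι → α | k < #{i | p (f i)}} * a ^ (k + 1) ≤
      (a * #{x | p x} + #{x | ¬p x}) ^ Fintype.card ι := by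
  have hweight : ∀ f : ι → α, ∏ i, (if p (f i) then a else 1) = a ^ #{i | p (f i)} := by
    intro f
    rw [prod_ite, prod_const, prod_const_one, mul_one]
  have htotal : ∑ x, (if p x then a else 1) = a * #{x | p x} + #{x | ¬p x} := by
    rw [sum_ite, sum_const, sum_const, smul_eq_mul, smul_eq_mul, mul_one, mul_comm]
  calc #{f : ι → α | k < #{i | p (f i)}} * a ^ (k + 1)
      ≤ ∑ f ∈ {f : ι → α | k < #{i | p (f i)}}, a ^ #{i | p (f i)} := by
        rw [← smul_eq_mul]
        exact card_nsmul_le_sum _ _ _ fun f hf => Nat.pow_le_pow_right ha (mem_filter.1 hf).2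
    _ ≤ ∑ f : ι → α, a ^ #{i | p (f i)} := sum_le_sum_of_subset (filter_subset _ _)
    _ = ∏ _i : ι, ∑ x, (if p x then a else 1) := by
        simp only [← hweight, Fintype.prod_sum]
    _ = (a * #{x | p x} + #{x | ¬p x}) ^ Fintype.card ι := by
        rw [prod_const, htotal, card_univ]

theorem card_filter_lt_card_filter_mul_three_pow_le (p : α → Prop) [DecidablePred p]
    (hp : #{x | p x} ≤ #{x | ¬p x}) (k : ℕ) :
    #{f : ι → α | k < #{i | p (f i)}} * 3 ^ (k + 1) ≤ (2 * Fintype.card α) ^ Fintype.card ι := by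
  refine (card_filter_lt_card_filter_mul_pow_le p (by norm_num) k).trans
    (Nat.pow_le_pow_left ?_ _)
  have hsplit : #{x | p x} + #{x | ¬p x} = Fintype.card α := card_filter_add_card_filter_not p
  omega

end Counting

theorem AddSubgroup.card_filter_mem_le_card_filter_not_mem {G : Type*} [AddGroup G]
    [Fintype {g : G // g ≠ 0}] (H : AddSubgroup G) [DecidablePred (· ∈ H)] (hH : H ≠ ⊤) :
    #{g : {g : G // g ≠ 0} | (g : G) ∈ H} ≤ #{g : {g : G // g ≠ 0} | (g : G) ∉ H} := by
  obtain ⟨x, hx⟩ : ∃ x, x ∉ H := by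
    by_contra! h
    exact hH (eq_top_iff.2 fun x _ => h x)
  have hshift : ∀ g ∈ H, g + x ∉ H := fun g hg hgx =>
    hx (by simpa using H.add_mem (H.neg_mem hg) hgx)
  calc #{g : {g : G // g ≠ 0} | (g : G) ∈ H}
      ≤ #(Finset.map (Function.Embedding.subtype _) {g : {g : G // g ≠ 0} | (g : G) ∉ H}) := by
        refine card_le_card_of_injOn (fun g => (g : G) + x) (fun g hg => ?_) ?_
        · have hg := (mem_filter.1 hg).2
          have hne : (g : G) + x ≠ 0 := fun h => hshift g hg (by rw [h]; exact H.zero_mem)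
          exact Finset.mem_map.2 ⟨⟨_, hne⟩, by simpa using hshift g hg, rfl⟩
        · intro g _ g' _ h
          exact Subtype.ext (add_right_cancel h)
    _ = #{g : {g : G // g ≠ 0} | (g : G) ∉ H} := card_map _

theorem natCard_dual_eq {K V : Type*} [Field K] [AddCommGroup V] [Module K V]
    [FiniteDimensional K V] : Nat.card (Dual K V) = Nat.card V := by
  rw [natCard_eq_pow_finrank (K := K) (V := Dual K V), natCard_eq_pow_finrank (K := K) (V := V),
    Subspace.dual_finrank_eq]

open Classical in
theorem card_exists_ne_top_lt_card_mul_three_pow_le {K V ι : Type*} [Field K] [AddCommGroup V]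
    [Module K V] [Fintype V] [Fintype ι] [DecidableEq ι] (k : ℕ) :
    #{f : ι → {v : V // v ≠ 0} | ∃ U : Submodule K V, U ≠ ⊤ ∧ k < #{i | (f i : V) ∈ U}} *
        3 ^ (k + 1) ≤
      Fintype.card V * (2 * Fintype.card {v : V // v ≠ 0}) ^ Fintype.card ι := by
  have hdual : Nat.card (Dual K V) = Fintype.card V := by
    rw [natCard_dual_eq, Nat.card_eq_fintype_card]
  have : Fintype (Dual K V) := @Fintype.ofFinite _
    (Nat.finite_of_card_ne_zero (by rw [hdual]; exact Fintype.card_ne_zero))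
  set S := {v : V // v ≠ 0}
  let bad : Dual K V → Finset (ι → S) := fun φ => {f | k < #{i | (f i : V) ∈ LinearMap.ker φ}}
  have hcover : ({f : ι → S | ∃ U : Submodule K V, U ≠ ⊤ ∧ k < #{i | (f i : V) ∈ U}} :
      Finset (ι → S)) ⊆
      ({φ | φ ≠ 0} : Finset (Dual K V)).biUnion bad := by
    intro f hf
    obtain ⟨U, hU, hk⟩ := (mem_filter.1 hf).2
    obtain ⟨φ, hφ, hUφ⟩ := U.exists_le_ker_of_lt_top hU.lt_top
    refine mem_biUnion.2 ⟨φ, mem_filter.2 ⟨mem_univ _, hφ⟩, mem_filter.2 ⟨mem_univ _, ?_⟩⟩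
    exact hk.trans_le (card_le_card (monotone_filter_right _ fun i _ hi => hUφ hi))
  have hbad : ∀ φ ∈ ({φ | φ ≠ 0} : Finset (Dual K V)),
      #(bad φ) * 3 ^ (k + 1) ≤ (2 * Fintype.card S) ^ Fintype.card ι := by
    intro φ hφ
    have hker : (LinearMap.ker φ).toAddSubgroup ≠ ⊤ := by
      simpa [LinearMap.ker_eq_top] using (mem_filter.1 hφ).2
    exact card_filter_lt_card_filter_mul_three_pow_le _
      ((LinearMap.ker φ).toAddSubgroup.card_filter_mem_le_card_filter_not_mem hker) k
  calc _ ≤ (∑ φ ∈ ({φ | φ ≠ 0} : Finset (Dual K V)), #(bad φ)) * 3 ^ (k + 1) :=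
        Nat.mul_le_mul_right _ ((card_le_card hcover).trans card_biUnion_le)
    _ = ∑ φ ∈ ({φ | φ ≠ 0} : Finset (Dual K V)), #(bad φ) * 3 ^ (k + 1) := sum_mul _ _ _
    _ ≤ #({φ | φ ≠ 0} : Finset (Dual K V)) * (2 * Fintype.card S) ^ Fintype.card ι :=
        sum_le_card_nsmul _ _ _ hbad
    _ ≤ Fintype.card V * (2 * Fintype.card S) ^ Fintype.card ι := by
        refine Nat.mul_le_mul_right _ ((card_filter_le _ _).trans ?_)
        rw [card_univ, ← hdual, Nat.card_eq_fintype_card]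

theorem two_pow_le_three_pow_mul_exp_neg (d : ℕ) : (2 : ℝ) ^ (8 * d) ≤ 3 ^ (6 * d) * exp (-d) := by
  rw [exp_neg, ← div_eq_mul_inv, le_div_iff₀ (exp_pos _)]
  have he : exp 1 ≤ 729 / 256 := (exp_one_lt_d9.trans (by norm_num)).le
  calc (2 : ℝ) ^ (8 * d) * exp d = (256 * exp 1) ^ d := by
        rw [mul_pow, ← exp_nat_mul, mul_one, pow_mul]; norm_num
    _ ≤ (256 * (729 / 256)) ^ d := by gcongr
    _ = 3 ^ (6 * d) := by rw [pow_mul]; norm_num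

theorem le_two_pow_mul_exp_neg_mul_pow_of_mul_three_pow_le {c s d : ℕ}
    (h : c * 3 ^ (6 * d + 1) ≤ 2 ^ d * (2 * s) ^ (8 * d)) :
    (c : ℝ) ≤ 2 ^ d * exp (-d) * s ^ (8 * d) := by
  have hreal : (c : ℝ) * 3 ^ (6 * d + 1) ≤ 2 ^ d * (2 * s) ^ (8 * d) := by exact_mod_cast h
  refine le_of_mul_le_mul_right ?_ (pow_pos (by norm_num : (0 : ℝ) < 3) (6 * d))
  calc (c : ℝ) * 3 ^ (6 * d) ≤ c * 3 ^ (6 * d + 1) := by gcongr <;> norm_num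
    _ ≤ 2 ^ d * (2 * s) ^ (8 * d) := hreal
    _ = 2 ^ d * 2 ^ (8 * d) * s ^ (8 * d) := by ring
    _ ≤ 2 ^ d * (3 ^ (6 * d) * exp (-d)) * s ^ (8 * d) := by
        gcongr; exact two_pow_le_three_pow_mul_exp_neg d
    _ = 2 ^ d * exp (-d) * s ^ (8 * d) * 3 ^ (6 * d) := by ring

theorem two_pow_mul_exp_neg_lt_one {d : ℕ} (hd : d ≠ 0) : (2 : ℝ) ^ d * exp (-d) < 1 := by
  rw [exp_neg, ← div_eq_mul_inv, div_lt_one (exp_pos _), ← exp_one_pow]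
  exact pow_lt_pow_left₀ (lt_trans (by norm_num) exp_one_gt_d9) (by norm_num) hd

open Classical in
/-- If `v 0, …, v (8d-1)` are chosen independently and uniformly from `V \ {0}`
(modelled by counting tuples in `Fin (8d) → V \ {0}`), then the probability that some
hyperplane `U` (a subspace of dimension `d-1`) contains more than `6d` of the `v i`
is at most `2^d · exp (-d)`, which is less than `1` for `d ≥ 1`. -/
theorem stmt2 (V : Type*) [AddCommGroup V] [Module (ZMod 2) V] [Fintype V]
    (d : ℕ) (hd : 1 ≤ d) (hdim : Module.finrank (ZMod 2) V = d) :
    (((Finset.univ : Finset (Fin (8 * d) → {v : V // v ≠ 0})).filter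
        (fun v => ∃ U : Submodule (ZMod 2) V, Module.finrank (ZMod 2) U = d - 1 ∧
          6 * d < (Finset.univ.filter (fun i => (v i : V) ∈ U)).card)).card : ℝ) ≤
      2 ^ d * Real.exp (-(d : ℝ)) *
        ((Finset.univ : Finset (Fin (8 * d) → {v : V // v ≠ 0})).card : ℝ) ∧
    2 ^ d * Real.exp (-(d : ℝ)) < 1 := by
  refine ⟨?_, two_pow_mul_exp_neg_lt_one (by omega)⟩
  have hproper : ∀ U : Submodule (ZMod 2) V, finrank (ZMod 2) U = d - 1 → U ≠ ⊤ := by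
    rintro U hU rfl
    rw [finrank_top] at hU
    omega
  have hV : Fintype.card V = 2 ^ d := by rw [card_eq_pow_finrank (K := ZMod 2), ZMod.card, hdim]
  have hsub : ({f | ∃ U : Submodule (ZMod 2) V, finrank (ZMod 2) U = d - 1 ∧
        6 * d < #{i | (f i : V) ∈ U}} : Finset (Fin (8 * d) → {v : V // v ≠ 0})) ⊆
      ({f | ∃ U : Submodule (ZMod 2) V, U ≠ ⊤ ∧ 6 * d < #{i | (f i : V) ∈ U}} :
        Finset (Fin (8 * d) → {v : V // v ≠ 0})) :=
    monotone_filter_right _ fun _ _ ⟨U, hU, hk⟩ => ⟨U, hproper U hU, hk⟩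
  have hcount := (Nat.mul_le_mul_right _ (card_le_card hsub)).trans
    (card_exists_ne_top_lt_card_mul_three_pow_le (K := ZMod 2) (6 * d))
  rw [hV, Fintype.card_fin] at hcount
  rw [card_univ, Fintype.card_fun, Fintype.card_fin]
  exact_mod_cast le_two_pow_mul_exp_neg_mul_pow_of_mul_three_pow_le hcount
end

section
/- For every function f: Z_2^n → [0,1] and every ε with 0 < ε < 1/2, there exists a subspace H ≤ Z_2^n of index at most twr(⌈1/ε³⌉) that is ε-regular for f. -/
open Classical

/-- The affine subspace (coset) `H + g` of `ℤ₂ⁿ`, as a finset. -/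
noncomputable def coset {n : ℕ} (H : Submodule (ZMod 2) (Fin n → ZMod 2))
    (g : Fin n → ZMod 2) : Finset (Fin n → ZMod 2) :=
  Finset.univ.filter (fun x => x - g ∈ H)

/-- The sign `(-1)^a` for `a : ℤ/2`. -/
noncomputable def sgn (a : ZMod 2) : ℝ := if a = 0 then 1 else -1

/-- The standard bilinear form `⟨x, η⟩` on `ℤ₂ⁿ`. -/
def ip {n : ℕ} (x η : Fin n → ZMod 2) : ZMod 2 := ∑ i, x i * η i

/-- The Fourier coefficient `\hat{f|_A}(η) = 𝔼_{x ∈ A}[f(x) (-1)^{⟨x,η⟩}]`. -/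
noncomputable def fcoef {n : ℕ} (A : Finset (Fin n → ZMod 2))
    (f : (Fin n → ZMod 2) → ℝ) (η : Fin n → ZMod 2) : ℝ :=
  (∑ x ∈ A, f x * sgn (ip x η)) / A.card

/-- The annihilator `H^⊥` of a subspace `H ≤ ℤ₂ⁿ`. -/
def perp {n : ℕ} (H : Submodule (ZMod 2) (Fin n → ZMod 2)) : Set (Fin n → ZMod 2) :=
  {η | ∀ h ∈ H, ip h η = 0}

/-- `f` restricted to the coset `H + g` is `ε`-regular: all nontrivial Fourier
coefficients are at most `ε` in absolute value. -/
noncomputable def regularOn {n : ℕ} (H : Submodule (ZMod 2) (Fin n → ZMod 2))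
    (g : Fin n → ZMod 2) (f : (Fin n → ZMod 2) → ℝ) (ε : ℝ) : Prop :=
  ∀ η ∉ perp H, |fcoef (coset H g) f η| ≤ ε

/-- `H` is an `ε`-regular subspace for `f`: the restriction of `f` is `ε`-regular on at
least a `(1-ε)` fraction of the cosets of `H` (counted through their representatives
`g ∈ ℤ₂ⁿ`, each coset being counted with multiplicity `|H|`). -/
noncomputable def regularSubspace {n : ℕ} (H : Submodule (ZMod 2) (Fin n → ZMod 2))
    (f : (Fin n → ZMod 2) → ℝ) (ε : ℝ) : Prop :=
  (1 - ε) * (2 : ℝ) ^ n ≤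
    ((Finset.univ.filter (fun g : Fin n → ZMod 2 => regularOn H g f ε)).card : ℝ)

/-- The tower function: `twr 0 = 1`, `twr (h+1) = 2 ^ twr h`. -/
def twr : ℕ → ℕ
  | 0 => 1
  | h + 1 => 2 ^ twr h

/-!
Energy increment. The energy of `H` is the mean square of the conditional expectation of `f`
on the cosets of `H`; it lies in `[0, 1]` and does not decrease when `H` is refined. If `H`
(of index `K`) is not `ε`-regular, more than `εK` cosets carry a character `η ∉ H^⊥` with
Fourier coefficient above `ε`. Intersecting `H` with the kernels of `⌈εK⌉` of these characters
gives `H'` of index at most `K * 2 ^ ⌈εK⌉ ≤ 2 ^ K`; on each such coset the character is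
orthogonal to the constants, so Pythagoras raises the energy by `ε²` on an `ε`-fraction of the
cosets, i.e. by `ε³` in total. Starting from `H = ℤ₂ⁿ`, this can be repeated at most
`⌈1/ε³⌉` times, and each step costs one exponential in the index.
-/

open Finset

local notation "𝔽₂^" n:max => Fin n → ZMod 2

lemma sq_sum_add_sq_sum_mul_le {α : Type*} (s : Finset α) (F χ : α → ℝ)
    (hχ : ∀ x ∈ s, χ x ^ 2 = 1) (hχ0 : ∑ x ∈ s, χ x = 0) :
    (∑ x ∈ s, F x) ^ 2 + (∑ x ∈ s, F x * χ x) ^ 2 ≤ #s * ∑ x ∈ s, F x ^ 2 := by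
  rcases s.eq_empty_or_nonempty with rfl | hs
  · simp
  have hN : (0 : ℝ) < #s := by exact_mod_cast hs.card_pos
  set m := (∑ x ∈ s, F x) / #s
  -- Cauchy–Schwarz for `F - m` and `χ`, which are orthogonal to the constants
  have hcs := sum_mul_sq_le_sq_mul_sq s (fun x => F x - m) χ
  have hmul : ∑ x ∈ s, (F x - m) * χ x = ∑ x ∈ s, F x * χ x := by
    simp only [sub_mul, sum_sub_distrib, ← mul_sum, hχ0, mul_zero, sub_zero]
  have hvar : ∑ x ∈ s, (F x - m) ^ 2 = ∑ x ∈ s, F x ^ 2 - (∑ x ∈ s, F x) ^ 2 / #s := by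
    simp only [sub_sq, sum_add_distrib, sum_sub_distrib, ← sum_mul, ← mul_sum, sum_const,
      nsmul_eq_mul, m]
    field_simp
    ring
  rw [hmul, hvar, sum_congr rfl hχ, sum_const, nsmul_one] at hcs
  rw [sub_mul, div_mul_cancel₀ _ hN.ne'] at hcs
  linarith

section

variable {n : ℕ} {H H' : Submodule (ZMod 2) (𝔽₂^n)} {g g' x y η : 𝔽₂^n} {f : 𝔽₂^n → ℝ}
  {ε : ℝ}

lemma mem_coset : x ∈ coset H g ↔ x - g ∈ H := by simp [coset]

lemma mem_coset_iff_mkQ_eq : x ∈ coset H g ↔ H.mkQ x = H.mkQ g :=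
  mem_coset.trans (Submodule.Quotient.eq H).symm

lemma mem_coset_comm : x ∈ coset H g ↔ g ∈ coset H x := by
  simp only [mem_coset_iff_mkQ_eq, eq_comm]

lemma coset_congr (h : H.mkQ g = H.mkQ g') : coset H g = coset H g' := by
  ext x; simp only [mem_coset_iff_mkQ_eq, h]

lemma coset_mkQ_out (g : 𝔽₂^n) : coset H (H.mkQ g).out = coset H g :=
  coset_congr (Quotient.out_eq' _)

lemma card_coset (H : Submodule (ZMod 2) (𝔽₂^n)) (g : 𝔽₂^n) : #(coset H g) = Nat.card H := by
  rw [Nat.card_eq_fintype_card, Fintype.card_subtype]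
  refine card_nbij' (· - g) (· + g) ?_ ?_ (fun _ _ => sub_add_cancel _ _)
    (fun _ _ => add_sub_cancel_right _ _)
  · intro x hx; simpa using mem_coset.1 hx
  · intro x hx; simpa [mem_coset] using hx

lemma coset_subset_coset (hle : H' ≤ H) (hx : x ∈ coset H g) : coset H' x ⊆ coset H g := by
  intro y hy
  rw [mem_coset] at *
  simpa using H.add_mem (hle hy) hx

lemma sum_sum_coset (u : 𝔽₂^n → ℝ) {s : Finset (𝔽₂^n)} (hs : ∀ x ∈ s, coset H x ⊆ s) :
    ∑ x ∈ s, ∑ y ∈ coset H x, u y = Nat.card H * ∑ y ∈ s, u y := by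
  rw [sum_comm' (t' := s) (s' := coset H), mul_sum]
  · simp only [sum_const, card_coset, nsmul_eq_mul]
  · exact fun x y => ⟨fun h => ⟨mem_coset_comm.1 h.2, hs x h.1 h.2⟩,
      fun h => ⟨hs y h.2 h.1, mem_coset_comm.1 h.1⟩⟩

lemma sum_comp_mkQ (u : 𝔽₂^n ⧸ H → ℝ) :
    ∑ g, u (H.mkQ g) = Nat.card H * ∑ q, u q := by
  rw [← Fintype.sum_fiberwise' H.mkQ, mul_sum]
  refine sum_congr rfl fun q _ => ?_
  rw [sum_const, nsmul_eq_mul, card_univ, Fintype.card_subtype, ← card_coset H q.out]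
  congr 3
  ext x
  rw [mem_filter, mem_coset_iff_mkQ_eq, Submodule.mkQ_apply, Submodule.mkQ_apply,
    Submodule.Quotient.mk_out]
  simp

lemma card_filter_comp_mkQ (P : 𝔽₂^n ⧸ H → Prop) :
    (#{g | P (H.mkQ g)} : ℝ) = Nat.card H * #{q | P q} := by
  simpa only [natCast_card_filter] using sum_comp_mkQ (fun q => if P q then (1 : ℝ) else 0)

lemma card_mul_card_quotient (H : Submodule (ZMod 2) (𝔽₂^n)) :
    (Nat.card H * Nat.card (𝔽₂^n ⧸ H) : ℝ) = 2 ^ n := by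
  rw [← Nat.cast_mul, ← Submodule.card_eq_card_quotient_mul_card]
  simp

lemma sgn_sq (a : ZMod 2) : sgn a ^ 2 = 1 := by
  unfold sgn; split <;> norm_num

lemma sgn_add_of_ne_zero (a : ZMod 2) {b : ZMod 2} (hb : b ≠ 0) : sgn (a + b) = -sgn a := by
  have key : ∀ a b : ZMod 2, b ≠ 0 → (a + b = 0 ↔ a ≠ 0) := by decide
  simp only [sgn, key a b hb]
  split_ifs <;> simp_all

lemma ip_add_left : ip (x + y) η = ip x η + ip y η := add_dotProduct x y η

lemma sgn_ip_eq_of_sub_mem (hη : η ∈ perp H) (h : x - y ∈ H) :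
    sgn (ip x η) = sgn (ip y η) := by
  have : ip x η - ip y η = 0 := (sub_dotProduct x y η).symm.trans (hη _ h)
  rw [sub_eq_zero.1 this]

lemma sum_sgn_ip_coset_eq_zero (hη : η ∉ perp H) (g : 𝔽₂^n) :
    ∑ x ∈ coset H g, sgn (ip x η) = 0 := by
  obtain ⟨h, hH, hh⟩ : ∃ h ∈ H, ip h η ≠ 0 := by simpa [perp] using hη
  -- translating by `h` preserves the coset and flips every sign
  have hflip : ∑ x ∈ coset H g, sgn (ip x η) = ∑ x ∈ coset H g, -sgn (ip x η) := by
    refine sum_nbij' (· + h) (· - h) (fun x hx => ?_) (fun x hx => ?_)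
      (fun x _ => add_sub_cancel_right x h) (fun x _ => sub_add_cancel x h) (fun x _ => ?_)
    · rw [mem_coset] at hx ⊢; simpa [add_sub_right_comm] using H.add_mem hx hH
    · rw [mem_coset] at hx ⊢; simpa [sub_right_comm] using H.sub_mem hx hH
    · rw [ip_add_left, sgn_add_of_ne_zero _ hh, neg_neg]
  rw [sum_neg_distrib] at hflip
  linarith

noncomputable def condAvg (H : Submodule (ZMod 2) (𝔽₂^n)) (f : 𝔽₂^n → ℝ) (x : 𝔽₂^n) : ℝ :=
  (∑ y ∈ coset H x, f y) / #(coset H x)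

noncomputable def energy (H : Submodule (ZMod 2) (𝔽₂^n)) (f : 𝔽₂^n → ℝ) : ℝ :=
  (∑ x, condAvg H f x ^ 2) / 2 ^ n

lemma natCard_submodule_pos : (0 : ℝ) < Nat.card H := by
  exact_mod_cast Nat.card_pos

lemma sum_condAvg_mul {s : Finset (𝔽₂^n)} (hs : ∀ x ∈ s, coset H x ⊆ s) {χ : 𝔽₂^n → ℝ}
    (hχ : ∀ x y, x - y ∈ H → χ x = χ y) :
    ∑ x ∈ s, condAvg H f x * χ x = ∑ x ∈ s, f x * χ x := by
  have hx : ∀ x ∈ s, condAvg H f x * χ x = (∑ y ∈ coset H x, f y * χ y) / Nat.card H := by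
    intro x _
    rw [condAvg, card_coset, div_mul_eq_mul_div, sum_mul]
    congr 1
    exact sum_congr rfl fun y hy => by rw [hχ y x (mem_coset.1 hy)]
  rw [sum_congr rfl hx, ← sum_div, sum_sum_coset _ hs,
    mul_div_cancel_left₀ _ natCard_submodule_pos.ne']

lemma condAvg_mem_Icc (hf : ∀ x, f x ∈ Set.Icc (0 : ℝ) 1) : condAvg H f x ∈ Set.Icc (0 : ℝ) 1 := by
  have hN : (0 : ℝ) < #(coset H x) := card_coset H x ▸ natCard_submodule_pos
  rw [condAvg, Set.mem_Icc, div_le_one hN]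
  refine ⟨div_nonneg (sum_nonneg fun y _ => (hf y).1) hN.le, ?_⟩
  simpa using sum_le_sum fun y (_ : y ∈ coset H x) => (hf y).2

lemma energy_nonneg : 0 ≤ energy H f := by
  unfold energy; positivity

lemma energy_le_one (hf : ∀ x, f x ∈ Set.Icc (0 : ℝ) 1) : energy H f ≤ 1 := by
  rw [energy, div_le_one (by positivity)]
  calc ∑ x, condAvg H f x ^ 2 ≤ ∑ _x : 𝔽₂^n, (1 : ℝ) := by
        refine sum_le_sum fun x _ => ?_
        obtain ⟨h0, h1⟩ := condAvg_mem_Icc (H := H) (x := x) hf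
        exact pow_le_one₀ h0 h1
    _ = 2 ^ n := by simp

lemma sum_coset_condAvg_mul_sgn (hle : H' ≤ H) (hη : η ∈ perp H') (g : 𝔽₂^n) :
    ∑ x ∈ coset H g, condAvg H' f x * sgn (ip x η) = ∑ x ∈ coset H g, f x * sgn (ip x η) :=
  sum_condAvg_mul (fun _ hx => coset_subset_coset hle hx) fun _ _ => sgn_ip_eq_of_sub_mem hη

lemma condAvg_eq_sum_coset_condAvg (hle : H' ≤ H) (g : 𝔽₂^n) :
    condAvg H f g = (∑ x ∈ coset H g, condAvg H' f x) / Nat.card H := by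
  have h := sum_condAvg_mul (f := f) (fun _ hx => coset_subset_coset hle hx)
    (χ := fun _ => 1) (fun _ _ _ => rfl) (s := coset H g)
  simp only [mul_one] at h
  rw [condAvg, h, card_coset]

lemma card_mul_condAvg_sq_le (hle : H' ≤ H) (g : 𝔽₂^n) :
    Nat.card H * condAvg H f g ^ 2 ≤ ∑ x ∈ coset H g, condAvg H' f x ^ 2 := by
  have hN : (0 : ℝ) < Nat.card H := natCard_submodule_pos
  have hcs := sq_sum_le_card_mul_sum_sq (s := coset H g) (f := condAvg H' f)
  rw [card_coset] at hcs
  rw [condAvg_eq_sum_coset_condAvg hle, div_pow, mul_div_assoc', sq (Nat.card H : ℝ),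
    mul_div_mul_left _ _ hN.ne', div_le_iff₀ hN]
  linarith

lemma card_mul_condAvg_sq_add_fcoef_sq_le (hle : H' ≤ H) (hη' : η ∈ perp H') (hη : η ∉ perp H)
    (g : 𝔽₂^n) :
    Nat.card H * (condAvg H f g ^ 2 + fcoef (coset H g) f η ^ 2) ≤
      ∑ x ∈ coset H g, condAvg H' f x ^ 2 := by
  have hN : (0 : ℝ) < Nat.card H := natCard_submodule_pos
  have h := sq_sum_add_sq_sum_mul_le (coset H g) (condAvg H' f) (fun x => sgn (ip x η))
    (fun x _ => sgn_sq _) (sum_sgn_ip_coset_eq_zero hη g)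
  rw [card_coset, sum_coset_condAvg_mul_sgn hle hη'] at h
  rw [condAvg_eq_sum_coset_condAvg hle, fcoef, card_coset, div_pow, div_pow, ← add_div,
    mul_div_assoc', sq (Nat.card H : ℝ), mul_div_mul_left _ _ hN.ne', div_le_iff₀ hN]
  linarith

lemma energy_add_le_energy (hle : H' ≤ H) (S : Finset (𝔽₂^n ⧸ H)) (η : 𝔽₂^n ⧸ H → 𝔽₂^n)
    (hη' : ∀ q ∈ S, η q ∈ perp H') (hη : ∀ q ∈ S, η q ∉ perp H) {δ : ℝ}
    (hδ : ∀ q ∈ S, δ ≤ fcoef (coset H q.out) f (η q) ^ 2) :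
    energy H f + δ * #S * Nat.card H / 2 ^ n ≤ energy H' f := by
  have hN : (0 : ℝ) < Nat.card H := natCard_submodule_pos
  have hcoset : ∀ g, Nat.card H * (condAvg H f g ^ 2 + if H.mkQ g ∈ S then δ else 0) ≤
      ∑ x ∈ coset H g, condAvg H' f x ^ 2 := by
    intro g
    split_ifs with hg
    · have hfc := hδ _ hg
      rw [coset_mkQ_out] at hfc
      calc _ ≤ Nat.card H * (condAvg H f g ^ 2 + fcoef (coset H g) f (η (H.mkQ g)) ^ 2) := by
            gcongr
        _ ≤ _ := card_mul_condAvg_sq_add_fcoef_sq_le hle (hη' _ hg) (hη _ hg) g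
    · simpa using card_mul_condAvg_sq_le (f := f) hle g
  have hbonus : ∑ g, (if H.mkQ g ∈ S then δ else 0) = Nat.card H * (δ * #S) := by
    rw [sum_comp_mkQ (fun q => if q ∈ S then δ else 0), sum_ite_mem, univ_inter, sum_const,
      nsmul_eq_mul, mul_comm δ]
  have htotal := sum_le_sum fun g (_ : g ∈ univ) => hcoset g
  rw [← mul_sum, sum_add_distrib, hbonus,
    sum_sum_coset _ fun _ _ => subset_univ _] at htotal
  have hsum := le_of_mul_le_mul_left htotal hN
  rw [energy, energy, ← add_div]
  gcongr
  linarith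

lemma regularOn_mkQ_out (g : 𝔽₂^n) : regularOn H (H.mkQ g).out f ε ↔ regularOn H g f ε := by
  simp only [regularOn, coset_mkQ_out]

lemma mul_card_quotient_lt_card_irregular (hnr : ¬ regularSubspace H f ε) :
    ε * Nat.card (𝔽₂^n ⧸ H) < #{q : 𝔽₂^n ⧸ H | ¬ regularOn H q.out f ε} := by
  have hN : (0 : ℝ) < Nat.card H := natCard_submodule_pos
  have hsplit := card_filter_add_card_filter_not (s := (univ : Finset (𝔽₂^n ⧸ H)))
    (fun q => regularOn H q.out f ε)
  rw [card_univ, ← Nat.card_eq_fintype_card] at hsplit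
  have hreg := card_filter_comp_mkQ (H := H) (fun q => regularOn H q.out f ε)
  simp only [regularOn_mkQ_out] at hreg
  rw [regularSubspace, not_le, hreg, ← card_mul_card_quotient H, ← hsplit] at hnr
  rw [← hsplit]
  push_cast at hnr ⊢
  nlinarith

lemma exists_le_perp_card_quotient_le {ι : Type*} [Finite ι]
    (H : Submodule (ZMod 2) (𝔽₂^n)) (η : ι → 𝔽₂^n) :
    ∃ H' ≤ H, (∀ i, η i ∈ perp H') ∧
      Nat.card (𝔽₂^n ⧸ H') ≤ Nat.card (𝔽₂^n ⧸ H) * 2 ^ Nat.card ι := by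
  let ψ := H.mkQ.prod (LinearMap.pi fun i => (dotProductBilin (ZMod 2) (ZMod 2)).flip (η i))
  refine ⟨LinearMap.ker ψ, fun x hx => ?_, fun i x hx => ?_, ?_⟩
  · exact (Submodule.Quotient.mk_eq_zero H).1 (congrArg Prod.fst hx)
  · exact congrFun (congrArg Prod.snd hx) i
  · calc Nat.card (𝔽₂^n ⧸ LinearMap.ker ψ) = Nat.card (LinearMap.range ψ) :=
          Nat.card_congr ψ.quotKerEquivRange.toEquiv
      _ ≤ Nat.card ((𝔽₂^n ⧸ H) × (ι → ZMod 2)) :=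
          Nat.card_le_card_of_injective _ Subtype.val_injective
      _ = Nat.card (𝔽₂^n ⧸ H) * 2 ^ Nat.card ι := by
          rw [Nat.card_prod, Nat.card_fun, Nat.card_zmod]

lemma card_quotient_eq_two_pow (H : Submodule (ZMod 2) (𝔽₂^n)) :
    Nat.card (𝔽₂^n ⧸ H) = 2 ^ Module.finrank (ZMod 2) (𝔽₂^n ⧸ H) := by
  rw [Nat.card_eq_fintype_card, Module.card_eq_pow_finrank (K := ZMod 2), ZMod.card]

lemma two_pow_mul_two_pow_ceil_le (hε : ε ≤ 1 / 2) (d : ℕ) :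
    2 ^ d * 2 ^ ⌈ε * 2 ^ d⌉₊ ≤ 2 ^ 2 ^ d := by
  rw [← pow_add]
  refine Nat.pow_le_pow_right two_pos ?_
  cases d with
  | zero =>
    have : ⌈ε * 2 ^ 0⌉₊ ≤ 1 := Nat.ceil_le.2 (by norm_num; linarith)
    simpa using this
  | succ k =>
    have hceil : ⌈ε * 2 ^ (k + 1)⌉₊ ≤ 2 ^ k :=
      Nat.ceil_le.2 (by push_cast; rw [pow_succ]; nlinarith [pow_pos (two_pos (α := ℝ)) k])
    have := Nat.lt_two_pow_self (n := k)
    rw [Nat.pow_succ]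
    omega

lemma exists_energy_increment (hε0 : 0 < ε) (hε1 : ε < 1 / 2) (hnr : ¬ regularSubspace H f ε) :
    ∃ H' : Submodule (ZMod 2) (𝔽₂^n),
      Nat.card (𝔽₂^n ⧸ H') ≤ 2 ^ Nat.card (𝔽₂^n ⧸ H) ∧ energy H f + ε ^ 3 ≤ energy H' f := by
  set K := Nat.card (𝔽₂^n ⧸ H)
  -- refine along only `⌈εK⌉` of the irregular cosets, so that the index stays below `2 ^ K`
  obtain ⟨S, hSirr, hScard⟩ := exists_subset_card_eq
    (Nat.ceil_le.2 (mul_card_quotient_lt_card_irregular hnr).le)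
  have hwit : ∀ q ∈ S, ∃ η, η ∉ perp H ∧ ε < |fcoef (coset H q.out) f η| := fun q hq => by
    simpa [regularOn] using (mem_filter.1 (hSirr hq)).2
  choose! η hη using hwit
  obtain ⟨H', hle, hperp, hcard⟩ := exists_le_perp_card_quotient_le H fun q : S => η q
  refine ⟨H', ?_, ?_⟩
  · rw [Nat.card_eq_finsetCard, hScard] at hcard
    obtain ⟨d, hd⟩ : ∃ d, K = 2 ^ d := ⟨_, card_quotient_eq_two_pow H⟩
    calc Nat.card (𝔽₂^n ⧸ H') ≤ K * 2 ^ ⌈ε * K⌉₊ := hcard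
      _ ≤ 2 ^ K := by rw [hd]; exact_mod_cast two_pow_mul_two_pow_ceil_le hε1.le d
  · have hinc := energy_add_le_energy (f := f) hle S η (fun q hq => hperp ⟨q, hq⟩)
      (fun q hq => (hη q hq).1) (δ := ε ^ 2) fun q hq => by
        simpa only [sq_abs] using pow_le_pow_left₀ hε0.le (hη q hq).2.le 2
    have hS : ε * K ≤ #S := hScard ▸ Nat.le_ceil _
    have hN := card_mul_card_quotient H
    have hgain : ε ^ 3 ≤ ε ^ 2 * #S * Nat.card H / 2 ^ n := by
      rw [le_div_iff₀ (by positivity), ← hN]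
      nlinarith [mul_le_mul_of_nonneg_left hS (by positivity : (0 : ℝ) ≤ ε ^ 2 * Nat.card H)]
    linarith

lemma exists_regularSubspace_or_le_energy (hε0 : 0 < ε) (hε1 : ε < 1 / 2) (k : ℕ) :
    ∃ H : Submodule (ZMod 2) (𝔽₂^n), Nat.card (𝔽₂^n ⧸ H) ≤ twr k ∧
      (regularSubspace H f ε ∨ k * ε ^ 3 ≤ energy H f) := by
  induction k with
  | zero => exact ⟨⊤, by simp [twr], Or.inr (by simpa using energy_nonneg)⟩
  | succ k ih =>
    obtain ⟨H, hcard, hH⟩ := ih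
    by_cases hreg : regularSubspace H f ε
    · exact ⟨H, hcard.trans (Nat.lt_two_pow_self).le, Or.inl hreg⟩
    obtain ⟨H', hcard', henergy⟩ := exists_energy_increment hε0 hε1 hreg
    refine ⟨H', hcard'.trans (Nat.pow_le_pow_right two_pos hcard), Or.inr ?_⟩
    push_cast
    linarith [hH.resolve_left hreg]

end

/-- Green's arithmetic regularity lemma in `ℤ₂ⁿ` (Theorem 1.2): for every
`0 < ε < 1/2`, every `f : ℤ₂ⁿ → [0,1]` has an `ε`-regular subspace `H` of index
(= number of cosets, `2^{n - dim H}`) at most `twr ⌈1/ε³⌉`. -/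
theorem stmt17 (ε : ℝ) (hε0 : 0 < ε) (hε1 : ε < 1 / 2) (n : ℕ)
    (f : (Fin n → ZMod 2) → ℝ) (hf : ∀ x, f x ∈ Set.Icc (0 : ℝ) 1) :
    ∃ H : Submodule (ZMod 2) (Fin n → ZMod 2),
      Nat.card ((Fin n → ZMod 2) ⧸ H) ≤ twr ⌈1 / ε ^ 3⌉₊ ∧
      regularSubspace H f ε := by
  obtain ⟨H, hcard, hreg | henergy⟩ :=
    exists_regularSubspace_or_le_energy (f := f) hε0 hε1 ⌈1 / ε ^ 3⌉₊
  · exact ⟨H, hcard, hreg⟩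
  refine ⟨H, hcard, by_contra fun hnr => ?_⟩
  obtain ⟨H', -, hinc⟩ := exists_energy_increment hε0 hε1 hnr
  have hε3 : 0 < ε ^ 3 := by positivity
  have hsteps : 1 ≤ ⌈1 / ε ^ 3⌉₊ * ε ^ 3 := (div_le_iff₀ hε3).1 (Nat.le_ceil _)
  linarith [energy_le_one (H := H') hf]
end
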